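/- arXiv:2605.09710 — 3 statements merged into one kernel-verified Lean document; each statement's English description precedes it below -/
import Mathlib

section
/- The ensemble {|0⟩, |1⟩, |+⟩} of qubit pure states is not strongly antidistinguishable: there is no POVM {Π_1, Π_2, Π_3} on ℂ² with ⟨0|Π_1|0⟩ = 0, ⟨1|Π_2|1⟩ = 0, ⟨+|Π_3|+⟩ = 0, and each Π_j having positive probability on at least one of the three states. -/
open Matrix Complex
open scoped ComplexOrder

noncomputable section

/-- Outer product `|v⟩⟨v|`. -/
def outer {n : Type*} [Fintype n] (v : n → ℂ) : Matrix n n ℂ := vecMulVec v (star v)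

/-- Expectation value `⟨v|M|v⟩`. -/
def expVal {n : Type*} [Fintype n] (M : Matrix n n ℂ) (v : n → ℂ) : ℂ := star v ⬝ᵥ (M *ᵥ v)

/-- Inner product `⟨v|w⟩`. -/
def ip {n : Type*} [Fintype n] (v w : n → ℂ) : ℂ := ∑ i, star (v i) * w i

/-- The states `|0⟩, |1⟩, |+⟩`. -/
def ψ : Fin 3 → (Fin 2 → ℂ) :=
  ![![1, 0], ![0, 1], ![(1 / Real.sqrt 2 : ℝ), (1 / Real.sqrt 2 : ℝ)]]

/-- `{|0⟩, |1⟩, |+⟩}` is not strongly antidistinguishable. -/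
theorem zero_one_plus_not_strongly_antidistinguishable :
    ¬ ∃ P : Fin 3 → Matrix (Fin 2) (Fin 2) ℂ,
      (∀ j, (P j).PosSemidef) ∧
      (∑ j, P j) = 1 ∧
      (∀ j, expVal (P j) (ψ j) = 0) ∧
      (∀ j, 0 < (∑ i, expVal (P j) (ψ i)).re) := by
  rintro ⟨P, hPSD, hsum, hzero, hpos⟩
  have hker : ∀ j, P j *ᵥ ψ j = 0 := fun j =>
    ((hPSD j).dotProduct_mulVec_zero_iff (ψ j)).mp (hzero j)
  have hs2 : ((Real.sqrt 2 : ℝ) : ℂ) ≠ 0 := by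
    exact_mod_cast (by positivity : (Real.sqrt 2 : ℝ) ≠ 0)
  -- column 0 of P 0 vanishes
  have h0 : ∀ i, P 0 i 0 = 0 := by
    intro i
    have := congrFun (hker 0) i
    simpa [ψ, mulVec, dotProduct, Fin.sum_univ_two] using this
  -- column 1 of P 1 vanishes
  have h1 : ∀ i, P 1 i 1 = 0 := by
    intro i
    have := congrFun (hker 1) i
    simpa [ψ, mulVec, dotProduct, Fin.sum_univ_two] using this
  -- rows of P 2 sum to zero
  have h2 : ∀ i, P 2 i 0 + P 2 i 1 = 0 := by
    intro i
    have h := congrFun (hker 2) i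
    simp [ψ, mulVec, dotProduct, Fin.sum_univ_two] at h
    have key : (P 2 i 0 + P 2 i 1) * (((Real.sqrt 2 : ℝ) : ℂ))⁻¹ = 0 := by
      field_simp at h ⊢
      linear_combination h
    rcases mul_eq_zero.mp key with h' | h'
    · exact h'
    · exact absurd (inv_eq_zero.mp h') hs2
  -- hermitian facts
  have herm0 : P 0 0 1 = 0 := by
    have := (hPSD 0).isHermitian.apply 0 1
    rw [← this, h0 1, star_zero]
  have herm1 : P 1 1 0 = 0 := by
    have := (hPSD 1).isHermitian.apply 1 0
    rw [← this, h1 0, star_zero]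
  -- off-diagonal entries of the completeness relation
  have e01 : P 0 0 1 + P 1 0 1 + P 2 0 1 = 0 := by
    have := congrFun (congrFun hsum 0) 1
    simpa [Fin.sum_univ_three, Matrix.one_apply] using this
  have e10 : P 0 1 0 + P 1 1 0 + P 2 1 0 = 0 := by
    have := congrFun (congrFun hsum 1) 0
    simpa [Fin.sum_univ_three, Matrix.one_apply] using this
  have p201 : P 2 0 1 = 0 := by linear_combination e01 - herm0 - h1 0
  have p210 : P 2 1 0 = 0 := by linear_combination e10 - herm1 - h0 1
  have p200 : P 2 0 0 = 0 := by linear_combination h2 0 - p201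
  have p211 : P 2 1 1 = 0 := by linear_combination h2 1 - p210
  have hP2 : P 2 = 0 := by
    ext i j
    fin_cases i <;> fin_cases j <;> assumption
  have := hpos 2
  rw [hP2] at this
  simp [expVal, Matrix.zero_mulVec] at this
end
end

section
/- Any two orthogonal bipartite pure states |ψ⟩, |φ⟩ ∈ ℂ^{d_A} ⊗ ℂ^{d_B} can be written, after a suitable choice of orthonormal basis {|i⟩}_{i=1}^{d_A} for Alice's space, as |ψ⟩ = Σ_i |i⟩|η_i⟩ and |φ⟩ = Σ_i |i⟩|η_i^⊥⟩ where for each i the (unnormalized) vectors satisfy ⟨η_i|η_i^⊥⟩ = 0. -/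
/-!
Put `M = φ ψᴴ`, an operator on Alice's space. For a unit vector `e`, the overlap of the
conditional states is `⟨η, η^⊥⟩ = ⟪e, M e⟫`, and `tr M = ⟨ψ|φ⟩ = 0`, so it suffices to find an
orthonormal basis in which the traceless operator `M` has zero diagonal. On an orthonormal pair
`x, y`, a suitable phase and the intermediate value theorem realise every point of the segment
`[⟪x, M x⟫, ⟪y, M y⟫]` as `⟪z, M z⟫` with `z` a unit vector in `span {x, y}`; merging the basis
vectors one at a time realises the average of the diagonal, `tr M / n = 0`. This gives a unit `u`
with `⟪u, M u⟫ = 0`; the compression of `M` to `u^⊥` is again traceless, and we recurse.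
-/

open Matrix Complex
open scoped ComplexOrder

noncomputable section

open ComplexConjugate Module
open scoped InnerProductSpace

lemma Real.exists_cos_sq_add_mul_cos_mul_sin_eq (s : ℝ) {t : ℝ} (ht₀ : 0 ≤ t) (ht₁ : t ≤ 1) :
    ∃ θ : ℝ, Real.cos θ ^ 2 + s * Real.cos θ * Real.sin θ = t :=
  intermediate_value_univ (Real.pi / 2) 0 (by fun_prop) (by simpa using And.intro ht₀ ht₁)

lemma Complex.exists_im_mul_exp_add_mul_exp_neg_eq_zero (b c z : ℂ) :
    ∃ θ : ℝ, ((b * exp (θ * I) + c * exp (-(θ * I))) * z).im = 0 := by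
  set h : ℝ → ℝ := fun θ => ((b * exp (θ * I) + c * exp (-(θ * I))) * z).im
  have h_pi : h Real.pi = -h 0 := by
    simp [h, exp_pi_mul_I, exp_neg]
    ring
  rcases le_total (h 0) 0 with h₀ | h₀
  · exact intermediate_value_univ 0 Real.pi (by fun_prop) ⟨h₀, by linarith⟩
  · exact intermediate_value_univ Real.pi 0 (by fun_prop) ⟨by linarith, h₀⟩

section InnerProductSpace

variable {E : Type*} [NormedAddCommGroup E] [InnerProductSpace ℂ E]

lemma inner_smul_add_smul_map_self (T : E →ₗ[ℂ] E) (x y : E) (a b : ℂ) :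
    ⟪a • x + b • y, T (a • x + b • y)⟫_ℂ =
      conj a * a * ⟪x, T x⟫_ℂ + conj a * b * ⟪x, T y⟫_ℂ + conj b * a * ⟪y, T x⟫_ℂ +
        conj b * b * ⟪y, T y⟫_ℂ := by
  simp only [map_add, map_smul, inner_add_left, inner_add_right, inner_smul_left,
    inner_smul_right]
  ring

lemma norm_smul_add_smul_sq_of_inner_eq_zero {x y : E} (hx : ‖x‖ = 1) (hy : ‖y‖ = 1)
    (hxy : ⟪x, y⟫_ℂ = 0) (a b : ℂ) : ‖a • x + b • y‖ ^ 2 = ‖a‖ ^ 2 + ‖b‖ ^ 2 := by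
  simp only [sq]
  rw [norm_add_sq_eq_norm_sq_add_norm_sq_of_inner_eq_zero (𝕜 := ℂ) _ _
    (by simp [inner_smul_left, inner_smul_right, hxy]), norm_smul, norm_smul, hx, hy, mul_one,
    mul_one]

theorem exists_norm_eq_one_inner_map_self_eq_segment (T : E →ₗ[ℂ] E) {x y : E}
    (hx : ‖x‖ = 1) (hy : ‖y‖ = 1) (hxy : ⟪x, y⟫_ℂ = 0) {t : ℝ} (ht₀ : 0 ≤ t) (ht₁ : t ≤ 1) :
    ∃ a b : ℂ, ‖a • x + b • y‖ = 1 ∧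
      ⟪a • x + b • y, T (a • x + b • y)⟫_ℂ = t * ⟪x, T x⟫_ℂ + (1 - t) * ⟪y, T y⟫_ℂ := by
  set δ := ⟪x, T x⟫_ℂ - ⟪y, T y⟫_ℂ
  by_cases hδ : δ = 0
  · refine ⟨1, 0, by simpa using hx, ?_⟩
    simp only [inner_smul_add_smul_map_self, map_one, map_zero]
    linear_combination (1 - (t : ℂ)) * hδ
  obtain ⟨θ, hθ⟩ := exists_im_mul_exp_add_mul_exp_neg_eq_zero ⟪x, T y⟫_ℂ ⟪y, T x⟫_ℂ (conj δ)
  set ω := exp (θ * I)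
  have hω : conj ω = exp (-(θ * I)) := by
    rw [← exp_conj, map_mul, conj_ofReal, conj_I, mul_neg]
  have hω_conj_mul : conj ω * ω = 1 := by rw [hω, ← exp_add, neg_add_cancel, exp_zero]
  rw [← hω] at hθ
  -- `θ` makes `g * conj δ` real, so `g` is a real multiple of `δ`
  set g := ⟪x, T y⟫_ℂ * ω + ⟪y, T x⟫_ℂ * conj ω
  set s : ℝ := (g * conj δ).re / normSq δ
  have hg : g = s * δ := by
    have hreal : g * conj δ = ((g * conj δ).re : ℂ) := Complex.ext rfl (by simpa using hθ)
    have hnormSq : (normSq δ : ℂ) ≠ 0 := by exact_mod_cast normSq_eq_zero.not.mpr hδ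
    rw [ofReal_div, div_mul_eq_mul_div, eq_div_iff hnormSq, normSq_eq_conj_mul_self]
    linear_combination δ * hreal
  obtain ⟨φ, hφ⟩ := Real.exists_cos_sq_add_mul_cos_mul_sin_eq s ht₀ ht₁
  refine ⟨Real.cos φ, ω * Real.sin φ, ?_, ?_⟩
  · rw [← pow_eq_one_iff_of_nonneg (norm_nonneg _) two_ne_zero,
      norm_smul_add_smul_sq_of_inner_eq_zero hx hy hxy, norm_mul, norm_exp_ofReal_mul_I, one_mul,
      norm_real, norm_real, Real.norm_eq_abs, Real.norm_eq_abs, sq_abs, sq_abs,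
      Real.cos_sq_add_sin_sq]
  · have hφ' : (Real.cos φ : ℂ) ^ 2 + s * Real.cos φ * Real.sin φ = t := by exact_mod_cast hφ
    have hpyth : (Real.cos φ : ℂ) ^ 2 + Real.sin φ ^ 2 = 1 := by
      exact_mod_cast Real.cos_sq_add_sin_sq φ
    rw [inner_smul_add_smul_map_self, map_mul, conj_ofReal, conj_ofReal]
    linear_combination (Real.cos φ * Real.sin φ : ℂ) * hg + δ * hφ'
      + (Real.sin φ ^ 2 * ⟪y, T y⟫_ℂ : ℂ) * hω_conj_mul
      + ⟪y, T y⟫_ℂ * hpyth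

theorem exists_mem_span_norm_eq_one_inner_map_self_eq_average (T : E →ₗ[ℂ] E) {n : ℕ}
    {v : Fin (n + 1) → E} (hv : Orthonormal ℂ v) :
    ∃ x ∈ Submodule.span ℂ (Set.range v), ‖x‖ = 1 ∧
      ⟪x, T x⟫_ℂ = (n + 1 : ℂ)⁻¹ * ∑ i, ⟪v i, T (v i)⟫_ℂ := by
  induction n with
  | zero => exact ⟨v 0, Submodule.subset_span ⟨0, rfl⟩, hv.1 0, by simp⟩
  | succ n ih =>
    obtain ⟨y, hy_span, hy_norm, hy⟩ := ih (hv.comp _ (Fin.castSucc_injective _))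
    have hy_orth : ⟪v (Fin.last _), y⟫_ℂ = 0 := by
      refine Submodule.mem_orthogonal_singleton_iff_inner_right.mp
        (Submodule.span_le.mpr ?_ hy_span)
      rintro _ ⟨i, rfl⟩
      exact Submodule.mem_orthogonal_singleton_iff_inner_right.mpr
        (hv.inner_eq_zero (Fin.castSucc_lt_last i).ne')
    have ht₁ : ((n : ℝ) + 2)⁻¹ ≤ 1 :=
      inv_le_one_of_one_le₀ (by linarith [n.cast_nonneg (α := ℝ)])
    obtain ⟨a, b, hnorm, hq⟩ := exists_norm_eq_one_inner_map_self_eq_segment T (hv.1 _) hy_norm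
      hy_orth (by positivity) ht₁
    refine ⟨a • v (Fin.last _) + b • y, ?_, hnorm, ?_⟩
    · exact add_mem (Submodule.smul_mem _ _ (Submodule.subset_span ⟨_, rfl⟩))
        (Submodule.smul_mem _ _ (Submodule.span_mono (Set.range_comp_subset_range _ _) hy_span))
    · rw [hq, hy, Fin.sum_univ_castSucc (fun i => ⟪v i, T (v i)⟫_ℂ)]
      simp only [Function.comp_apply]
      push_cast
      rw [add_assoc, one_add_one_eq_two]
      field_simp
      ring

theorem exists_norm_eq_one_inner_map_self_eq_zero [FiniteDimensional ℂ E]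
    (hE : 0 < finrank ℂ E) {T : E →ₗ[ℂ] E} (hT : LinearMap.trace ℂ E T = 0) :
    ∃ x : E, ‖x‖ = 1 ∧ ⟪x, T x⟫_ℂ = 0 := by
  obtain ⟨n, hn⟩ := Nat.exists_eq_succ_of_ne_zero hE.ne'
  let b := (stdOrthonormalBasis ℂ E).reindex (finCongr hn)
  obtain ⟨x, -, hx, hTx⟩ := exists_mem_span_norm_eq_one_inner_map_self_eq_average T b.orthonormal
  exact ⟨x, hx, by rw [hTx, ← LinearMap.trace_eq_sum_inner, hT, mul_zero]⟩

def LinearMap.compression (T : E →ₗ[ℂ] E) (K : Submodule ℂ E) [K.HasOrthogonalProjection] :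
    K →ₗ[ℂ] K :=
  K.orthogonalProjectionOnto.toLinearMap ∘ₗ T ∘ₗ K.subtype

lemma LinearMap.inner_compression_apply (T : E →ₗ[ℂ] E) (K : Submodule ℂ E)
    [K.HasOrthogonalProjection] (x y : K) :
    ⟪x, T.compression K y⟫_ℂ = ⟪(x : E), T y⟫_ℂ := by
  simp [LinearMap.compression]

lemma orthonormal_cons_of_mem_orthogonal {n : ℕ} {u : E} (hu : ‖u‖ = 1)
    {c : Fin n → (ℂ ∙ u)ᗮ} (hc : Orthonormal ℂ c) :
    Orthonormal ℂ (Fin.cons u fun i => (c i : E) : Fin (n + 1) → E) := by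
  refine ⟨Fin.cases hu fun i => by simpa using hc.1 i, ?_⟩
  intro i j hij
  induction i using Fin.cases <;> induction j using Fin.cases
  · exact absurd rfl hij
  · exact Submodule.mem_orthogonal_singleton_iff_inner_right.mp (c _).2
  · exact Submodule.mem_orthogonal_singleton_iff_inner_left.mp (c _).2
  · simpa using hc.2 (Fin.succ_injective _ |>.ne_iff.mp hij)

lemma exists_orthonormalBasis_cons {n : ℕ} (hn : finrank ℂ E = n + 1) {u : E} (hu : ‖u‖ = 1)
    (c : OrthonormalBasis (Fin n) ℂ (ℂ ∙ u)ᗮ) :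
    ∃ b : OrthonormalBasis (Fin (n + 1)) ℂ E, ⇑b = Fin.cons u fun i => (c i : E) := by
  have hv := orthonormal_cons_of_mem_orthogonal hu c.orthonormal
  exact ⟨(basisOfOrthonormalOfCardEqFinrank hv (by simp [hn])).toOrthonormalBasis (by simpa),
    by simp⟩

lemma trace_compression_orthogonal_singleton {n : ℕ} (hn : finrank ℂ E = n + 1) {u : E}
    (hu : ‖u‖ = 1) (T : E →ₗ[ℂ] E) :
    LinearMap.trace ℂ _ (T.compression (ℂ ∙ u)ᗮ) = LinearMap.trace ℂ E T - ⟪u, T u⟫_ℂ := by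
  have : FiniteDimensional ℂ E := .of_finrank_eq_succ hn
  have : Fact (finrank ℂ E = n + 1) := ⟨hn⟩
  have hu₀ : u ≠ 0 := norm_ne_zero_iff.mp (by simp [hu])
  let c := (stdOrthonormalBasis ℂ (ℂ ∙ u)ᗮ).reindex
    (finCongr (Submodule.finrank_orthogonal_span_singleton (n := n) hu₀))
  obtain ⟨b, hb⟩ := exists_orthonormalBasis_cons hn hu c
  rw [LinearMap.trace_eq_sum_inner _ c, LinearMap.trace_eq_sum_inner _ b, hb, Fin.sum_univ_succ]
  simp only [Fin.cons_zero, Fin.cons_succ, LinearMap.inner_compression_apply]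
  ring

theorem exists_orthonormalBasis_inner_map_self_eq_zero [FiniteDimensional ℂ E] {n : ℕ}
    (hn : finrank ℂ E = n) {T : E →ₗ[ℂ] E} (hT : LinearMap.trace ℂ E T = 0) :
    ∃ b : OrthonormalBasis (Fin n) ℂ E, ∀ i, ⟪b i, T (b i)⟫_ℂ = 0 := by
  induction n generalizing E with
  | zero => exact ⟨(stdOrthonormalBasis ℂ E).reindex (finCongr hn), fun i => i.elim0⟩
  | succ n ih =>
    obtain ⟨u, hu, hTu⟩ := exists_norm_eq_one_inner_map_self_eq_zero (by omega) hT
    have : Fact (finrank ℂ E = n + 1) := ⟨hn⟩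
    have hu₀ : u ≠ 0 := norm_ne_zero_iff.mp (by simp [hu])
    have hT' : LinearMap.trace ℂ _ (T.compression (ℂ ∙ u)ᗮ) = 0 := by
      rw [trace_compression_orthogonal_singleton hn hu, hT, hTu, sub_zero]
    obtain ⟨c, hc⟩ := ih (Submodule.finrank_orthogonal_span_singleton hu₀) hT'
    obtain ⟨b, hb⟩ := exists_orthonormalBasis_cons hn hu c
    refine ⟨b, Fin.cases ?_ fun i => ?_⟩
    · simpa only [hb, Fin.cons_zero] using hTu
    · simpa only [hb, Fin.cons_succ, LinearMap.inner_compression_apply] using hc i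

end InnerProductSpace

lemma Matrix.trace_toEuclideanLin {𝕜 α : Type*} [RCLike 𝕜] [Fintype α] [DecidableEq α]
    (M : Matrix α α 𝕜) : LinearMap.trace 𝕜 _ (toEuclideanLin M) = M.trace := by
  rw [toEuclideanLin_eq_toLin_orthonormal,
    LinearMap.trace_eq_matrix_trace 𝕜 (EuclideanSpace.basisFun α 𝕜).toBasis,
    LinearMap.toMatrix_toLin]

lemma ip_eq_inner {ι : Type*} [Fintype ι] (x y : EuclideanSpace ℂ ι) :
    ip (fun i => x i) (fun i => y i) = ⟪x, y⟫_ℂ := by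
  simp [ip, PiLp.inner_apply, mul_comm]

lemma ip_vecMul_eq_inner_toEuclideanLin {α β : Type*} [Fintype α] [DecidableEq α] [Fintype β]
    (ψ φ : Matrix α β ℂ) (e : EuclideanSpace ℂ α) :
    ip (fun b => ∑ a, star (e a) * ψ a b) (fun b => ∑ a, star (e a) * φ a b) =
      ⟪e, toEuclideanLin (φ * ψᴴ) e⟫_ℂ := by
  change star (star e.ofLp ᵥ* ψ) ⬝ᵥ (star e.ofLp ᵥ* φ) = (φ * ψᴴ) *ᵥ e.ofLp ⬝ᵥ star e.ofLp
  rw [star_vecMul, star_star, dotProduct_comm, ← dotProduct_mulVec, mulVec_mulVec,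
    dotProduct_comm]

theorem walgate_hardy_general (dA dB : ℕ) (ψ φ : Fin dA → Fin dB → ℂ)
    (horth : ∑ a, ∑ b, star (ψ a b) * φ a b = 0) :
    ∃ e : Fin dA → (Fin dA → ℂ),
      (∀ i j, ip (e i) (e j) = if i = j then 1 else 0) ∧
      (∀ i, ip (fun b => ∑ a, star (e i a) * ψ a b) (fun b => ∑ a, star (e i a) * φ a b) = 0) := by
  have htrace : LinearMap.trace ℂ _ (toEuclideanLin (of φ * (of ψ)ᴴ)) = 0 := by
    rw [Matrix.trace_toEuclideanLin]
    simpa [Matrix.trace, Matrix.mul_apply, mul_comm] using horth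
  obtain ⟨b, hb⟩ :=
    exists_orthonormalBasis_inner_map_self_eq_zero finrank_euclideanSpace_fin htrace
  refine ⟨fun i a => b i a, fun i j => ?_, fun i => ?_⟩
  · rw [ip_eq_inner]
    exact orthonormal_iff_ite.mp b.orthonormal i j
  · exact (ip_vecMul_eq_inner_toEuclideanLin (of ψ) (of φ) (b i)).trans (hb i)

/-- **Walgate–Hardy lemma.** For any two orthogonal bipartite pure states `ψ, φ` there is an
orthonormal basis `e` of Alice's space in which the conditional (unnormalized) Bob states
`η_i = (⟨i|⊗I)ψ` and `η_i^⊥ = (⟨i|⊗I)φ` are orthogonal for every `i`. -/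
theorem walgate_hardy (dA dB : ℕ) (ψ φ : Fin dA → Fin dB → ℂ)
    (hψ : ∑ a, ∑ b, Complex.normSq (ψ a b) = 1)
    (hφ : ∑ a, ∑ b, Complex.normSq (φ a b) = 1)
    (horth : ∑ a, ∑ b, star (ψ a b) * φ a b = 0) :
    ∃ e : Fin dA → (Fin dA → ℂ),
      (∀ i j, ip (e i) (e j) = if i = j then 1 else 0) ∧
      (∀ i, ip (fun b => ∑ a, star (e i a) * ψ a b) (fun b => ∑ a, star (e i a) * φ a b) = 0) :=
  walgate_hardy_general dA dB ψ φ horth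
end
end

section
/- Let |θ⟩ = cosθ|0⟩ + sinθ|1⟩. For the three two-qubit states {|0⟩|0⟩, |0⟩|θ⟩, |θ⟩|0⟩}, the pairwise squared overlaps are cos²θ, cos²θ, cos⁴θ, and the Caves–Fuchs–Schack conditions 2cos²θ + cos⁴θ < 1 and (1 − 2cos²θ − cos⁴θ)² ≥ 4cos⁸θ hold simultaneously if and only if arccos(1/√3) ≤ θ ≤ arccos(−1/√3) (for θ ∈ (0, π)); equivalently, in terms of c = cos²θ, iff c ≤ 1/3. -/
open Matrix Complex
open scoped ComplexOrder

noncomputable section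

def tp (v w : Fin 2 → ℂ) : Fin 2 × Fin 2 → ℂ := fun p => v p.1 * w p.2

def q0 : Fin 2 → ℂ := ![1, 0]

/-- `|θ⟩ = cosθ|0⟩ + sinθ|1⟩`. -/
def qθ (θ : ℝ) : Fin 2 → ℂ := ![(Real.cos θ : ℝ), (Real.sin θ : ℝ)]

/-- The two-qubit states `|00⟩, |0θ⟩, |θ0⟩`. -/
def φloc (θ : ℝ) : Fin 3 → (Fin 2 × Fin 2 → ℂ) :=
  ![tp q0 q0, tp q0 (qθ θ), tp (qθ θ) q0]

/-- Pairwise squared overlaps are `cos²θ, cos²θ, cos⁴θ`; the Caves–Fuchs–Schack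
conditions hold iff `arccos(1/√3) ≤ θ ≤ arccos(−1/√3)`, equivalently `cos²θ ≤ 1/3`. -/
theorem local_parts_antidist_range (θ : ℝ) (h0 : 0 < θ) (hπ : θ < Real.pi) :
    (Complex.normSq (ip (φloc θ 0) (φloc θ 1)) = Real.cos θ ^ 2 ∧
     Complex.normSq (ip (φloc θ 0) (φloc θ 2)) = Real.cos θ ^ 2 ∧
     Complex.normSq (ip (φloc θ 1) (φloc θ 2)) = Real.cos θ ^ 4) ∧
    ((2 * Real.cos θ ^ 2 + Real.cos θ ^ 4 < 1 ∧
        (1 - 2 * Real.cos θ ^ 2 - Real.cos θ ^ 4) ^ 2 ≥ 4 * Real.cos θ ^ 8) ↔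
      (Real.arccos (1 / Real.sqrt 3) ≤ θ ∧ θ ≤ Real.arccos (-(1 / Real.sqrt 3)))) ∧
    ((Real.arccos (1 / Real.sqrt 3) ≤ θ ∧ θ ≤ Real.arccos (-(1 / Real.sqrt 3))) ↔
      Real.cos θ ^ 2 ≤ 1 / 3) := by
  have hs3 : (0:ℝ) < Real.sqrt 3 := Real.sqrt_pos.2 (by norm_num)
  have hx1 : (1 / Real.sqrt 3 : ℝ) ≤ 1 := by
    rw [div_le_one hs3]
    nlinarith [Real.sq_sqrt (by norm_num : (3:ℝ) ≥ 0), Real.sqrt_nonneg 3]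
  have hx0 : (0:ℝ) < 1 / Real.sqrt 3 := by positivity
  have hsq : (1 / Real.sqrt 3 : ℝ) ^ 2 = 1 / 3 := by
    rw [div_pow, one_pow, Real.sq_sqrt (by norm_num : (0:ℝ) ≤ 3)]
  -- arccos characterization
  have key : ∀ x : ℝ, -1 ≤ x → x ≤ 1 → (Real.arccos x ≤ θ ↔ Real.cos θ ≤ x) := by
    intro x h1 h2
    constructor
    · intro h
      have := Real.cos_le_cos_of_nonneg_of_le_pi (Real.arccos_nonneg x) hπ.le h
      rwa [Real.cos_arccos h1 h2] at this
    · intro h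
      have hθ := Real.arccos_cos h0.le hπ.le
      by_contra hlt
      push_neg at hlt
      have := Real.cos_le_cos_of_nonneg_of_le_pi h0.le (Real.arccos_le_pi x) hlt.le
      rw [Real.cos_arccos h1 h2] at this
      have : Real.cos θ = x := le_antisymm h this
      rw [← this, Real.arccos_cos h0.le hπ.le] at hlt
      exact lt_irrefl θ hlt
  have key2 : ∀ x : ℝ, -1 ≤ x → x ≤ 1 → (θ ≤ Real.arccos x ↔ x ≤ Real.cos θ) := by
    intro x h1 h2
    constructor
    · intro h
      have := Real.cos_le_cos_of_nonneg_of_le_pi h0.le (Real.arccos_le_pi x) h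
      rwa [Real.cos_arccos h1 h2] at this
    · intro h
      by_contra hlt
      push_neg at hlt
      have := Real.cos_le_cos_of_nonneg_of_le_pi (Real.arccos_nonneg x) hπ.le hlt.le
      rw [Real.cos_arccos h1 h2] at this
      have : Real.cos θ = x := le_antisymm this h
      rw [← this, Real.arccos_cos h0.le hπ.le] at hlt
      exact lt_irrefl θ hlt
  have third : (Real.arccos (1 / Real.sqrt 3) ≤ θ ∧ θ ≤ Real.arccos (-(1 / Real.sqrt 3))) ↔
      Real.cos θ ^ 2 ≤ 1 / 3 := by
    rw [key _ (by linarith) hx1, key2 _ (by linarith) (by linarith)]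
    constructor
    · rintro ⟨ha, hb⟩; nlinarith
    · intro h
      have habs : |Real.cos θ| ≤ 1 / Real.sqrt 3 := by
        rw [← Real.sqrt_sq_eq_abs]
        have : Real.sqrt (Real.cos θ ^ 2) ≤ Real.sqrt (1/3) := Real.sqrt_le_sqrt h
        calc Real.sqrt (Real.cos θ ^ 2) ≤ Real.sqrt (1/3) := this
          _ = 1 / Real.sqrt 3 := by
            rw [show (1/3:ℝ) = (1/Real.sqrt 3)^2 from hsq.symm, Real.sqrt_sq hx0.le]
      exact ⟨(abs_le.1 habs).2, by linarith [(abs_le.1 habs).1]⟩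
  have hc0 : (0:ℝ) ≤ Real.cos θ ^ 2 := sq_nonneg _
  have hc1 : Real.cos θ ^ 2 < 1 := by
    have hsin : 0 < Real.sin θ := Real.sin_pos_of_pos_of_lt_pi h0 hπ
    nlinarith [Real.sin_sq_add_cos_sq θ]
  set c := Real.cos θ ^ 2 with hc
  have second : (2 * c + c ^ 2 < 1 ∧ (1 - 2 * c - c ^ 2) ^ 2 ≥ 4 * c ^ 4) ↔ c ≤ 1/3 := by
    constructor
    · rintro ⟨h1, h2⟩
      nlinarith [sq_nonneg (1 - c), sq_nonneg c]
    · intro h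
      constructor
      · nlinarith
      · nlinarith [mul_nonneg (mul_nonneg (by linarith : (0:ℝ) ≤ 1 - 3*c)
          (by linarith : (0:ℝ) ≤ 1 + c)) (sq_nonneg (1 - c))]
  refine ⟨?_, ?_, third⟩
  · refine ⟨?_, ?_, ?_⟩ <;>
    · simp [ip, φloc, tp, q0, qθ, Fintype.sum_prod_type, Fin.sum_univ_two, Complex.normSq, Complex.cos_ofReal_re, Complex.sin_ofReal_re]
      ring
  · have h48 : Real.cos θ ^ 4 = c ^ 2 := by rw [hc]; ring
    have h8 : Real.cos θ ^ 8 = c ^ 4 := by rw [hc]; ring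
    rw [h48, h8, second, third]
end
end
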